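/- arXiv:1309.5066 — 4 statements merged into one kernel-verified Lean document; each statement's English description precedes it below -/
import Mathlib

section
/- Suppose u : ℝ×ℝ² → ℝ³ is continuous with |u(t,x,y)| = 1 for all (t,x,y) (values in the unit sphere S²), φ : ℝ×ℝ² → ℝ, the pair (u,φ) is (μ,k,c)-equivariant, and the first component satisfies u₀(t,0,0) > 0 for all t ∈ ℝ. Then: (1) if k = 0, then u(t,x,x) = u(t,x,−x) = u(t,0,0) for all t,x ∈ ℝ; (2) if k ≠ 0, then u(t,x,x) = u(t,x,−x) = (1,0,0) for all t,x ∈ ℝ. -/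
/-- Rotation about the first axis of `ℝ³` by angle `θ`. -/
noncomputable def rot (θ : ℝ) (v : Fin 3 → ℝ) : Fin 3 → ℝ :=
  ![v 0, v 1 * Real.cos θ - v 2 * Real.sin θ, v 1 * Real.sin θ + v 2 * Real.cos θ]

open Filter Real Topology

private lemma exists_seq_aux (k : ℝ) (hk : k ≠ 0) (θ : ℝ) :
    ∃ a : ℕ → ℝ, Tendsto a atTop atTop ∧
      ∀ n, Real.cos (k * a n) = Real.cos θ ∧ Real.sin (k * a n) = Real.sin θ := by
  set ε : ℝ := if 0 < k then 1 else -1 with hε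
  have hεk : 0 < ε / k := by
    rcases lt_or_gt_of_ne hk with h | h
    · have : ε = -1 := by simp [hε, not_lt.mpr h.le, h.not_gt]
      rw [this]; exact div_pos_of_neg_of_neg (by norm_num) h
    · have : ε = 1 := by simp [hε, h]
      rw [this]; positivity
  refine ⟨fun n => θ / k + (n : ℝ) * (2 * π * (ε / k)), ?_, ?_⟩
  · apply tendsto_atTop_add_const_left
    have h2 : (0:ℝ) < 2 * π * (ε / k) := by positivity
    exact (tendsto_natCast_atTop_atTop (R := ℝ)).atTop_mul_const h2
  · intro n
    have hεint : ∃ m : ℤ, (m : ℝ) = ε * n := by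
      rcases lt_or_gt_of_ne hk with h | h
      · exact ⟨-n, by simp [hε, not_lt.mpr h.le, h.not_gt]⟩
      · exact ⟨n, by simp [hε, h]⟩
    obtain ⟨m, hm⟩ := hεint
    have key : k * (θ / k + (n : ℝ) * (2 * π * (ε / k))) = θ + (m : ℝ) * (2 * π) := by
      rw [hm]; field_simp
    rw [key, Real.cos_add_int_mul_two_pi, Real.sin_add_int_mul_two_pi]
    exact ⟨rfl, rfl⟩

private lemma rot_lim (k : ℝ) (hk : k ≠ 0) (v L : Fin 3 → ℝ)
    (h : Tendsto (fun α => rot (k * α) v) atTop (𝓝 L)) :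
    v = L ∧ v 1 = 0 ∧ v 2 = 0 := by
  obtain ⟨a, ha, hca⟩ := exists_seq_aux k hk 0
  obtain ⟨b, hb, hcb⟩ := exists_seq_aux k hk π
  have h1 : Tendsto (fun n => rot (k * a n) v) atTop (𝓝 L) := h.comp ha
  have h2 : Tendsto (fun n => rot (k * b n) v) atTop (𝓝 L) := h.comp hb
  have e1 : (fun n => rot (k * a n) v) = fun _ => v := by
    funext n
    have := hca n
    funext i
    fin_cases i <;> simp [rot, this.1, this.2]
  have e2 : (fun n => rot (k * b n) v) = fun _ => ![v 0, -(v 1), -(v 2)] := by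
    funext n
    have := hcb n
    funext i
    fin_cases i <;> simp [rot, this.1, this.2]
  rw [e1] at h1
  rw [e2] at h2
  have hv : v = L := tendsto_nhds_unique tendsto_const_nhds h1
  have hv' : ![v 0, -(v 1), -(v 2)] = L := tendsto_nhds_unique tendsto_const_nhds h2
  have h1' : -(v 1) = v 1 := by
    have := congrFun hv' 1
    simp only [Matrix.cons_val_one, Matrix.head_cons, Matrix.cons_val_zero] at this
    rw [this, hv]
  have h2' : -(v 2) = v 2 := by
    have := congrFun hv' 2
    simp at this
    rw [this, hv]
  exact ⟨hv, by linarith, by linarith⟩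

private lemma rot_lim0 (v L : Fin 3 → ℝ)
    (h : Tendsto (fun α => rot ((0:ℝ) * α) v) atTop (𝓝 L)) : v = L := by
  have e : (fun α : ℝ => rot ((0:ℝ) * α) v) = fun _ => v := by
    funext α
    funext i
    fin_cases i <;> simp [rot]
  rw [e] at h
  exact tendsto_nhds_unique tendsto_const_nhds h

/-- If `u : ℝ×ℝ² → S² ⊂ ℝ³` is continuous, `(u,φ)` is `(μ,k,c)`-equivariant, and
`u₀(t,0,0) > 0`, then along the cross `|x| = |y|`: if `k = 0` then `u(t,x,±x) = u(t,0,0)`,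
and if `k ≠ 0` then `u(t,x,±x) = (1,0,0)`. -/
theorem stmt0 (μ k c : ℝ) (u : ℝ × ℝ × ℝ → Fin 3 → ℝ) (φ : ℝ × ℝ × ℝ → ℝ)
    (hu_cont : Continuous u)
    (hu_sphere : ∀ p : ℝ × ℝ × ℝ, (u p 0) ^ 2 + (u p 1) ^ 2 + (u p 2) ^ 2 = 1)
    (hequiv_u : ∀ t₀ α₀ t x y : ℝ,
      u (t + t₀, x * Real.cosh α₀ + y * Real.sinh α₀, x * Real.sinh α₀ + y * Real.cosh α₀)
        = rot (μ * t₀ + k * α₀) (u (t, x, y)))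
    (hequiv_φ : ∀ t₀ α₀ t x y : ℝ,
      φ (t + t₀, x * Real.cosh α₀ + y * Real.sinh α₀, x * Real.sinh α₀ + y * Real.cosh α₀)
        = φ (t, x, y) + c * α₀)
    (hpos : ∀ t : ℝ, u (t, 0, 0) 0 > 0) :
    (k = 0 → ∀ t x : ℝ, u (t, x, x) = u (t, 0, 0) ∧ u (t, x, -x) = u (t, 0, 0)) ∧
    (k ≠ 0 → ∀ t x : ℝ, u (t, x, x) = ![1, 0, 0] ∧ u (t, x, -x) = ![1, 0, 0]) := by
  -- key tendsto facts
  have hx0 : ∀ x : ℝ, Tendsto (fun α : ℝ => x * Real.exp (-α)) atTop (𝓝 0) := by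
    intro x
    have : Tendsto (fun α : ℝ => Real.exp (-α)) atTop (𝓝 0) :=
      Real.tendsto_exp_atBot.comp tendsto_neg_atTop_atBot
    simpa using this.const_mul x
  have hpt : ∀ t x y : ℝ,
      Tendsto (fun α : ℝ => ((t : ℝ), x * Real.exp (-α), y * Real.exp (-α))) atTop
        (𝓝 (t, 0, 0)) :=
    by
    intro t x y
    rw [show ((t, (0:ℝ), (0:ℝ)) : ℝ × ℝ × ℝ) = (t, ((0:ℝ), (0:ℝ))) from rfl, nhds_prod_eq,
      nhds_prod_eq]
    exact tendsto_const_nhds.prodMk ((hx0 x).prodMk (hx0 y))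
  -- equivariance along the diagonals
  have keyp : ∀ t x : ℝ, ∀ α : ℝ,
      rot (-k * α) (u (t, x, x)) = u (t, x * Real.exp (-α), x * Real.exp (-α)) := by
    intro t x α
    have h := hequiv_u 0 (-α) t x x
    rw [show x * Real.cosh (-α) + x * Real.sinh (-α) = x * Real.exp (-α) by
          rw [← Real.cosh_add_sinh]; ring,
        show x * Real.sinh (-α) + x * Real.cosh (-α) = x * Real.exp (-α) by
          rw [← Real.cosh_add_sinh]; ring] at h
    rw [show μ * 0 + k * (-α) = -k * α by ring, add_zero] at h
    exact h.symm
  have keym : ∀ t x : ℝ, ∀ α : ℝ,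
      rot (k * α) (u (t, x, -x)) = u (t, x * Real.exp (-α), -x * Real.exp (-α)) := by
    intro t x α
    have h := hequiv_u 0 α t x (-x)
    rw [show x * Real.cosh α + -x * Real.sinh α = x * Real.exp (-α) by
          rw [← Real.cosh_sub_sinh]; ring,
        show x * Real.sinh α + -x * Real.cosh α = -x * Real.exp (-α) by
          rw [← Real.cosh_sub_sinh]; ring] at h
    rw [show μ * 0 + k * α = k * α by ring, add_zero] at h
    exact h.symm
  have limp : ∀ t x : ℝ,
      Tendsto (fun α => rot (-k * α) (u (t, x, x))) atTop (𝓝 (u (t, 0, 0))) := by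
    intro t x
    have := (hu_cont.tendsto (t, 0, 0)).comp (hpt t x x)
    exact this.congr fun α => (keyp t x α).symm
  have limm : ∀ t x : ℝ,
      Tendsto (fun α => rot (k * α) (u (t, x, -x))) atTop (𝓝 (u (t, 0, 0))) := by
    intro t x
    have := (hu_cont.tendsto (t, 0, 0)).comp (hpt t x (-x))
    exact this.congr fun α => (keym t x α).symm
  constructor
  · intro hk t x
    subst hk
    constructor
    · exact rot_lim0 _ _ (by simpa using limp t x)
    · exact rot_lim0 _ _ (by simpa using limm t x)
  · intro hk t x
    have hk' : -k ≠ 0 := neg_ne_zero.mpr hk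
    obtain ⟨hp, hp1, hp2⟩ := rot_lim (-k) hk' _ _ (limp t x)
    obtain ⟨hm, hm1, hm2⟩ := rot_lim k hk _ _ (limm t x)
    -- u(t,0,0) has components (1,0,0)
    have hL1 : u (t, 0, 0) 1 = 0 := by rw [← hp]; exact hp1
    have hL2 : u (t, 0, 0) 2 = 0 := by rw [← hp]; exact hp2
    have hL0 : u (t, 0, 0) 0 = 1 := by
      have hs := hu_sphere (t, 0, 0)
      rw [hL1, hL2] at hs
      have h0 := hpos t
      nlinarith
    have hL : u (t, 0, 0) = ![1, 0, 0] := by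
      funext i
      fin_cases i
      · simpa using hL0
      · simpa using hL1
      · simpa using hL2
    exact ⟨hp.trans hL, hm.trans hL⟩
end

section
/- Assume k² + b k > 0. Let a₀ > 0 and let s : (0,a₀] → ℝ be twice differentiable, with s(a) ∈ (−π,π) for all a in the sphere case Γ = sin, satisfying the reduced radial equation (4.24): s″(a) + s′(a)/a − μ Γ(s(a)) + V′(s(a))/a² = 0 for all a ∈ (0,a₀]. If lim_{a→0⁺} s(a) = 0 and lim_{a→0⁺} a s′(a) = 0, then s(a) = 0 for all a ∈ (0,a₀]. -/
open Set

set_option maxHeartbeats 1000000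

/-- `F(s) = ∫₀ˢ Γ`. -/
noncomputable def Ffun (Γ : ℝ → ℝ) (s : ℝ) : ℝ := ∫ t in (0:ℝ)..s, Γ t

/-- `G(s) = (k²/2) Γ(s)² + b k F(s) − k² F(s)²`. -/
noncomputable def Gfun (k b : ℝ) (Γ : ℝ → ℝ) (s : ℝ) : ℝ :=
  k ^ 2 / 2 * (Γ s) ^ 2 + b * k * Ffun Γ s - k ^ 2 * (Ffun Γ s) ^ 2

/-- Sphere case: `P(s) = (1 − cos s)/(1 + cos s)`, the smooth extension of `F²/Γ²`. -/
noncomputable def Psph (s : ℝ) : ℝ := (1 - Real.cos s) / (1 + Real.cos s)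

/-- Hyperbolic case: `P(s) = (cosh s − 1)/(cosh s + 1)`. -/
noncomputable def Phyp (s : ℝ) : ℝ := (Real.cosh s - 1) / (Real.cosh s + 1)

/-- `V(s) = G(s) + (c²/2) P(s)`. -/
noncomputable def Vfun (k b c : ℝ) (Γ P : ℝ → ℝ) (s : ℝ) : ℝ :=
  Gfun k b Γ s + c ^ 2 / 2 * P s

lemma abs_sin_le_abs (x : ℝ) : |Real.sin x| ≤ |x| := by
  have key : ∀ y : ℝ, 0 ≤ y → |Real.sin y| ≤ |y| := by
    intro y hy
    rcases le_total y 1 with h1 | h1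
    · rw [abs_of_nonneg hy, abs_of_nonneg (Real.sin_nonneg_of_nonneg_of_le_pi hy
        (h1.trans (by linarith [Real.pi_gt_three])))]
      exact Real.sin_le hy
    · calc |Real.sin y| ≤ 1 := Real.abs_sin_le_one y
        _ ≤ y := h1
        _ = |y| := (abs_of_nonneg hy).symm
  rcases le_total 0 x with h | h
  · exact key x h
  · have := key (-x) (by linarith)
    rwa [Real.sin_neg, abs_neg, abs_neg] at this

lemma abs_sinh_le {M x : ℝ} (h : |x| ≤ M) : |Real.sinh x| ≤ Real.cosh M * |x| := by
  rw [Real.abs_sinh]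
  have hM : 0 ≤ M := (abs_nonneg x).trans h
  set y := |x| with hy
  have hy0 : 0 ≤ y := abs_nonneg x
  have hder : ∀ t : ℝ, HasDerivAt (fun t => Real.cosh M * t - Real.sinh t)
      (Real.cosh M - Real.cosh t) t := by
    intro t
    have := ((hasDerivAt_id t).const_mul (Real.cosh M)).sub (Real.hasDerivAt_sinh t)
    exact this.congr_deriv (by simp)
  have mono : MonotoneOn (fun t => Real.cosh M * t - Real.sinh t) (Icc 0 M) := by
    apply monotoneOn_of_hasDerivWithinAt_nonneg (convex_Icc 0 M)
      (f' := fun t => Real.cosh M - Real.cosh t)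
    · exact fun t _ => (hder t).continuousAt.continuousWithinAt
    · exact fun t _ => (hder t).hasDerivWithinAt
    · intro t ht
      rw [interior_Icc] at ht
      have : Real.cosh t ≤ Real.cosh M := by
        rw [Real.cosh_le_cosh, abs_of_nonneg ht.1.le, abs_of_nonneg hM]
        exact ht.2.le
      linarith
  have h0 : (fun t => Real.cosh M * t - Real.sinh t) 0 ≤ (fun t => Real.cosh M * t - Real.sinh t) y :=
    mono (left_mem_Icc.mpr hM) ⟨hy0, h⟩ hy0
  simp only [mul_zero, Real.sinh_zero, sub_zero] at h0
  linarith

lemma Ffun_sin (x : ℝ) : Ffun Real.sin x = 1 - Real.cos x := by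
  simp [Ffun, integral_sin]

lemma Ffun_sinh (x : ℝ) : Ffun Real.sinh x = Real.cosh x - 1 := by
  unfold Ffun
  rw [intervalIntegral.integral_eq_sub_of_hasDerivAt
    (fun t _ => Real.hasDerivAt_cosh t) (Real.continuous_sinh.intervalIntegrable 0 x)]
  simp

lemma one_add_cos_pos {x : ℝ} (hx : x ∈ Ioo (-Real.pi) Real.pi) : 0 < 1 + Real.cos x := by
  rcases lt_or_eq_of_le (Real.neg_one_le_cos x) with h | h
  · linarith
  · exfalso
    obtain ⟨n, hn⟩ := Real.cos_eq_neg_one_iff.mp h.symm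
    have hπ := Real.pi_pos
    obtain ⟨h1, h2⟩ := hx
    have e1 : (n : ℝ) * (2 * Real.pi) = x - Real.pi := by linarith
    have hn1 : (-1 : ℝ) < n := by
      have : (-1 : ℝ) * (2 * Real.pi) < (n : ℝ) * (2 * Real.pi) := by rw [e1]; linarith
      exact lt_of_mul_lt_mul_right this (by linarith)
    have hn2 : (n : ℝ) < 0 := by
      have : (n : ℝ) * (2 * Real.pi) < 0 * (2 * Real.pi) := by rw [e1]; linarith
      exact lt_of_mul_lt_mul_right this (by linarith)
    have g1 : (-1 : ℤ) < n := by exact_mod_cast hn1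
    have g2 : n < (0 : ℤ) := by exact_mod_cast hn2
    omega

/-- `Q` in the sphere case, so that `V' = sin ⬝ Qs`. -/
noncomputable def Qsph (k b c x : ℝ) : ℝ :=
  3 * k ^ 2 * Real.cos x - 2 * k ^ 2 + b * k + c ^ 2 / (1 + Real.cos x) ^ 2

/-- `Q` in the hyperbolic case, so that `V' = sinh ⬝ Qh`. -/
noncomputable def Qhyp (k b c x : ℝ) : ℝ :=
  2 * k ^ 2 + b * k - k ^ 2 * Real.cosh x + c ^ 2 / (1 + Real.cosh x) ^ 2

lemma hasDerivAt_Vsph (k b c : ℝ) {x : ℝ} (hx : x ∈ Ioo (-Real.pi) Real.pi) :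
    HasDerivAt (Vfun k b c Real.sin Psph) (Real.sin x * Qsph k b c x) x := by
  have hne : 1 + Real.cos x ≠ 0 := (one_add_cos_pos hx).ne'
  have hfun : Vfun k b c Real.sin Psph = fun y =>
      k ^ 2 / 2 * (Real.sin y) ^ 2 + (b * k * (1 - Real.cos y) - k ^ 2 * (1 - Real.cos y) ^ 2)
        + c ^ 2 / 2 * ((1 - Real.cos y) / (1 + Real.cos y)) := by
    funext y; simp only [Vfun, Gfun, Psph, Ffun_sin]; ring
  rw [hfun]
  have hA : HasDerivAt (fun y => 1 - Real.cos y) (Real.sin x) x := by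
    simpa using (Real.hasDerivAt_cos x).const_sub 1
  have hB : HasDerivAt (fun y => 1 + Real.cos y) (-Real.sin x) x := by
    simpa using (Real.hasDerivAt_cos x).const_add 1
  have h1 : HasDerivAt (fun y => k ^ 2 / 2 * (Real.sin y) ^ 2)
      (k ^ 2 / 2 * (2 * Real.sin x * Real.cos x)) x := by
    have := ((Real.hasDerivAt_sin x).pow 2).const_mul (k ^ 2 / 2)
    simpa [mul_comm, mul_assoc, mul_left_comm] using this
  have h2 : HasDerivAt (fun y => b * k * (1 - Real.cos y)) (b * k * Real.sin x) x :=
    hA.const_mul (b * k)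
  have h3 : HasDerivAt (fun y => k ^ 2 * (1 - Real.cos y) ^ 2)
      (k ^ 2 * (2 * (1 - Real.cos x) * Real.sin x)) x := by
    have := (hA.pow 2).const_mul (k ^ 2)
    simpa [mul_comm, mul_assoc, mul_left_comm] using this
  have h4 : HasDerivAt (fun y => c ^ 2 / 2 * ((1 - Real.cos y) / (1 + Real.cos y)))
      (c ^ 2 / 2 * ((Real.sin x * (1 + Real.cos x) - (1 - Real.cos x) * (-Real.sin x))
        / (1 + Real.cos x) ^ 2)) x :=
    (hA.div hB hne).const_mul (c ^ 2 / 2)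
  have H := (h1.add (h2.sub h3)).add h4
  refine H.congr_deriv ?_
  unfold Qsph
  field_simp
  ring

lemma hasDerivAt_Vhyp (k b c : ℝ) (x : ℝ) :
    HasDerivAt (Vfun k b c Real.sinh Phyp) (Real.sinh x * Qhyp k b c x) x := by
  have hpos : 0 < 1 + Real.cosh x := by positivity
  have hne : Real.cosh x + 1 ≠ 0 := by linarith
  have hfun : Vfun k b c Real.sinh Phyp = fun y =>
      k ^ 2 / 2 * (Real.sinh y) ^ 2 + (b * k * (Real.cosh y - 1) - k ^ 2 * (Real.cosh y - 1) ^ 2)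
        + c ^ 2 / 2 * ((Real.cosh y - 1) / (Real.cosh y + 1)) := by
    funext y; simp only [Vfun, Gfun, Phyp, Ffun_sinh]; ring
  rw [hfun]
  have hA : HasDerivAt (fun y => Real.cosh y - 1) (Real.sinh x) x := by
    simpa using (Real.hasDerivAt_cosh x).sub_const 1
  have hB : HasDerivAt (fun y => Real.cosh y + 1) (Real.sinh x) x := by
    simpa using (Real.hasDerivAt_cosh x).add_const 1
  have h1 : HasDerivAt (fun y => k ^ 2 / 2 * (Real.sinh y) ^ 2)
      (k ^ 2 / 2 * (2 * Real.sinh x * Real.cosh x)) x := by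
    have := ((Real.hasDerivAt_sinh x).pow 2).const_mul (k ^ 2 / 2)
    simpa [mul_comm, mul_assoc, mul_left_comm] using this
  have h2 : HasDerivAt (fun y => b * k * (Real.cosh y - 1)) (b * k * Real.sinh x) x :=
    hA.const_mul (b * k)
  have h3 : HasDerivAt (fun y => k ^ 2 * (Real.cosh y - 1) ^ 2)
      (k ^ 2 * (2 * (Real.cosh x - 1) * Real.sinh x)) x := by
    have := (hA.pow 2).const_mul (k ^ 2)
    simpa [mul_comm, mul_assoc, mul_left_comm] using this
  have h4 : HasDerivAt (fun y => c ^ 2 / 2 * ((Real.cosh y - 1) / (Real.cosh y + 1)))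
      (c ^ 2 / 2 * ((Real.sinh x * (Real.cosh x + 1) - (Real.cosh x - 1) * Real.sinh x)
        / (Real.cosh x + 1) ^ 2)) x :=
    (hA.div hB hne).const_mul (c ^ 2 / 2)
  have H := (h1.add (h2.sub h3)).add h4
  refine H.congr_deriv ?_
  unfold Qhyp
  have hne' : 1 + Real.cosh x ≠ 0 := hpos.ne'
  field_simp
  ring

lemma cross_bound {u v : ℝ} (w L : ℝ) (hL : 0 ≤ L) (h : |u| ≤ L * |v|) :
    |w * u| ≤ L * (w ^ 2 + v ^ 2) / 2 := by
  rw [abs_mul]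
  have h2 : |w| * |u| ≤ |w| * (L * |v|) := mul_le_mul_of_nonneg_left h (abs_nonneg w)
  have h3 : |w| * |v| ≤ (w ^ 2 + v ^ 2) / 2 := by
    nlinarith [sq_nonneg (|w| - |v|), sq_abs w, sq_abs v]
  nlinarith [abs_nonneg w, abs_nonneg v, hL]

lemma key (μ : ℝ) (Γ V Q : ℝ → ℝ) (D : Set ℝ) (hDo : IsOpen D) (hD0 : (0:ℝ) ∈ D)
    (hΓodd : ∀ x, Γ (-x) = -Γ x)
    (hΓlow : ∀ x ∈ Icc (0:ℝ) 1, x / 2 ≤ Γ x)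
    (hΓup : ∀ M : ℝ, ∃ K : ℝ, 0 ≤ K ∧ ∀ x : ℝ, |x| ≤ M → |Γ x| ≤ K * |x|)
    (hQc : ContinuousOn Q D) (hQ0 : 0 < Q 0)
    (hV0 : V 0 = 0) (hVd : ∀ x ∈ D, HasDerivAt V (Γ x * Q x) x)
    (a₀ : ℝ) (ha₀ : 0 < a₀) (s : ℝ → ℝ)
    (hdiff : ∀ a ∈ Ioc (0:ℝ) a₀, DifferentiableAt ℝ s a ∧ DifferentiableAt ℝ (deriv s) a)
    (hmap : ∀ a ∈ Ioc (0:ℝ) a₀, s a ∈ D)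
    (hode : ∀ a ∈ Ioc (0:ℝ) a₀,
      deriv (deriv s) a + deriv s a / a - μ * Γ (s a)
        + (Γ (s a) * Q (s a)) / a ^ 2 = 0)
    (hlim0 : Filter.Tendsto s (nhdsWithin 0 (Ioi 0)) (nhds 0))
    (hlim1 : Filter.Tendsto (fun a => a * deriv s a) (nhdsWithin 0 (Ioi 0)) (nhds 0)) :
    ∀ a ∈ Ioc (0:ℝ) a₀, s a = 0 := by
  have hq0 : (0:ℝ) < Q 0 := hQ0
  -- choose δ
  have hQat : ContinuousAt Q 0 := hQc.continuousAt (hDo.mem_nhds hD0)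
  have h2ev : ∀ᶠ x in nhds (0:ℝ), Q 0 / 2 < Q x :=
    hQat.eventually (eventually_gt_nhds (by linarith))
  obtain ⟨ε, hε, hball⟩ := Metric.eventually_nhds_iff.mp ((hDo.eventually_mem hD0).and h2ev)
  set δ : ℝ := min (ε / 2) 1 with hδdef
  have hδpos : 0 < δ := lt_min (by linarith) one_pos
  have hδ1 : δ ≤ 1 := min_le_right _ _
  have hδprop : ∀ x : ℝ, |x| ≤ δ → x ∈ D ∧ Q 0 / 2 < Q x := by
    intro x hx
    apply hball
    rw [Real.dist_eq, sub_zero]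
    calc |x| ≤ δ := hx
      _ ≤ ε / 2 := min_le_left _ _
      _ < ε := by linarith
  -- lower bound for V near 0
  have hWd : ∀ x : ℝ, |x| ≤ δ → HasDerivAt (fun y => V y - Q 0 / 8 * y ^ 2)
      (Γ x * Q x - Q 0 / 4 * x) x := by
    intro x hx
    have h := (hVd x (hδprop x hx).1).sub ((hasDerivAt_pow 2 x).const_mul (Q 0 / 8))
    refine h.congr_deriv ?_
    push_cast
    ring
  have hVlb : ∀ x : ℝ, |x| ≤ δ → Q 0 / 8 * x ^ 2 ≤ V x := by
    intro x hx
    rcases le_total 0 x with hx0 | hx0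
    · have mono : MonotoneOn (fun y => V y - Q 0 / 8 * y ^ 2) (Icc 0 δ) := by
        apply monotoneOn_of_hasDerivWithinAt_nonneg (convex_Icc 0 δ)
          (f' := fun y => Γ y * Q y - Q 0 / 4 * y)
        · intro y hy
          exact (hWd y (by rw [abs_of_nonneg hy.1]; exact hy.2)).continuousAt.continuousWithinAt
        · intro y hy
          rw [interior_Icc] at hy
          exact (hWd y (by rw [abs_of_nonneg hy.1.le]; exact hy.2.le)).hasDerivWithinAt
        · intro y hy
          rw [interior_Icc] at hy
          have hyδ : |y| ≤ δ := by rw [abs_of_nonneg hy.1.le]; exact hy.2.le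
          have hQy : Q 0 / 2 ≤ Q y := (hδprop y hyδ).2.le
          have hΓy : y / 2 ≤ Γ y := hΓlow y ⟨hy.1.le, hy.2.le.trans hδ1⟩
          have hmul : y / 2 * (Q 0 / 2) ≤ Γ y * Q y :=
            mul_le_mul hΓy hQy (by linarith) (by linarith [hy.1.le])
          nlinarith [hy.1.le]
      have hxm : x ∈ Icc (0:ℝ) δ := ⟨hx0, by rwa [abs_of_nonneg hx0] at hx⟩
      have := mono (left_mem_Icc.mpr hδpos.le) hxm hx0
      simp only [hV0] at this
      nlinarith [this]
    · have anti : AntitoneOn (fun y => V y - Q 0 / 8 * y ^ 2) (Icc (-δ) 0) := by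
        apply antitoneOn_of_hasDerivWithinAt_nonpos (convex_Icc (-δ) 0)
          (f' := fun y => Γ y * Q y - Q 0 / 4 * y)
        · intro y hy
          exact (hWd y (by rw [abs_of_nonpos hy.2]; linarith [hy.1])).continuousAt.continuousWithinAt
        · intro y hy
          rw [interior_Icc] at hy
          exact (hWd y (by rw [abs_of_nonpos hy.2.le]; linarith [hy.1.le])).hasDerivWithinAt
        · intro y hy
          rw [interior_Icc] at hy
          have hyδ : |y| ≤ δ := by rw [abs_of_nonpos hy.2.le]; linarith [hy.1.le]
          have hQy : Q 0 / 2 ≤ Q y := (hδprop y hyδ).2.le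
          have hQypos : 0 < Q y := by linarith
          have hΓy : Γ y ≤ y / 2 := by
            have h1 : (-y) / 2 ≤ Γ (-y) := hΓlow (-y)
              ⟨by linarith [hy.2.le], by
                have : -y ≤ δ := by linarith [hy.1.le]
                linarith⟩
            have h2 : Γ (-y) = -Γ y := hΓodd y
            linarith
          have t1 : Γ y * Q y ≤ y / 2 * Q y := mul_le_mul_of_nonneg_right hΓy hQypos.le
          have t2 : y / 2 * Q y ≤ y / 2 * (Q 0 / 2) :=
            mul_le_mul_of_nonpos_left hQy (by linarith [hy.2.le])
          nlinarith
      have hxm : x ∈ Icc (-δ) 0 := ⟨by rw [abs_of_nonpos hx0] at hx; linarith, hx0⟩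
      have := anti hxm (right_mem_Icc.mpr (by linarith)) hx0
      simp only [hV0] at this
      nlinarith [this]
  -- choose a₁
  have hsδ : s ⁻¹' Metric.ball 0 δ ∈ nhdsWithin (0:ℝ) (Ioi 0) :=
    hlim0 (Metric.ball_mem_nhds 0 hδpos)
  obtain ⟨ε₁, hε₁, hsub⟩ := Metric.mem_nhdsWithin_iff.mp hsδ
  set a₁ : ℝ := min (ε₁ / 2) a₀ with ha₁def
  have ha₁pos : 0 < a₁ := lt_min (by linarith) ha₀
  have ha₁le : a₁ ≤ a₀ := min_le_right _ _
  have hsmall : ∀ a ∈ Ioc (0:ℝ) a₁, |s a| ≤ δ := by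
    intro a ha
    have hmem : a ∈ Metric.ball (0:ℝ) ε₁ ∩ Ioi 0 := by
      constructor
      · rw [Metric.mem_ball, Real.dist_eq, sub_zero, abs_of_pos ha.1]
        calc a ≤ a₁ := ha.2
          _ ≤ ε₁ / 2 := min_le_left _ _
          _ < ε₁ := by linarith
      · exact ha.1
    have := hsub hmem
    rw [mem_preimage, Metric.mem_ball, Real.dist_eq, sub_zero] at this
    exact this.le
  obtain ⟨K, hK0, hKb⟩ := hΓup δ
  have hsubI : Ioc (0:ℝ) a₁ ⊆ Ioc 0 a₀ := Ioc_subset_Ioc le_rfl ha₁le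
  -- energy
  set E : ℝ → ℝ := fun a => (a * deriv s a) ^ 2 / 2 + V (s a) with hEdef
  have hE' : ∀ a ∈ Ioc (0:ℝ) a₀, HasDerivAt E (μ * a ^ 2 * Γ (s a) * deriv s a) a := by
    intro a ha
    have hs := (hdiff a ha).1
    have hds := (hdiff a ha).2
    have hd1 : HasDerivAt (fun t => t * deriv s t) (deriv s a + a * deriv (deriv s) a) a := by
      exact ((hasDerivAt_id a).mul hds.hasDerivAt).congr_deriv (by simp)
    have h2 : HasDerivAt (fun t => (t * deriv s t) ^ 2 / 2)
        ((a * deriv s a) * (deriv s a + a * deriv (deriv s) a)) a := by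
      have := (hd1.pow 2).div_const 2
      refine this.congr_deriv ?_
      push_cast
      ring
    have h3 : HasDerivAt (fun t => V (s t)) (Γ (s a) * Q (s a) * deriv s a) a := by
      have := (hVd (s a) (hmap a ha)).comp a hs.hasDerivAt
      exact this
    have hsum := h2.add h3
    have hd'eq : deriv (deriv s) a
        = μ * Γ (s a) - deriv s a / a - Γ (s a) * Q (s a) / a ^ 2 := by
      have := hode a ha; linarith
    have hane : a ≠ 0 := ne_of_gt ha.1
    refine hsum.congr_deriv ?_
    rw [hd'eq]
    field_simp
    ring
  set C : ℝ := |μ| * K * (1 + 8 / Q 0) with hCdef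
  have hC0 : 0 ≤ C := by positivity
  have hEbound : ∀ a ∈ Ioc (0:ℝ) a₁,
      μ * a ^ 2 * Γ (s a) * deriv s a ≤ C * a * E a := by
    intro a ha
    have hδa := hsmall a ha
    have hV0' : 0 ≤ V (s a) := le_trans (by positivity) (hVlb (s a) hδa)
    have hs2 : Q 0 / 8 * (s a) ^ 2 ≤ V (s a) := hVlb _ hδa
    have hVE : V (s a) ≤ E a := by
      rw [hEdef]; simp only; nlinarith [sq_nonneg (a * deriv s a)]
    have hE0 : 0 ≤ E a := le_trans hV0' hVE
    have hc := cross_bound (a * deriv s a) K hK0 (hKb (s a) hδa)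
    have e1 : μ * a ^ 2 * Γ (s a) * deriv s a
        = (μ * a) * ((a * deriv s a) * Γ (s a)) := by ring
    have step1 : μ * a ^ 2 * Γ (s a) * deriv s a
        ≤ |μ| * a * (K * ((a * deriv s a) ^ 2 + (s a) ^ 2) / 2) := by
      rw [e1]
      calc (μ * a) * ((a * deriv s a) * Γ (s a))
          ≤ |(μ * a) * ((a * deriv s a) * Γ (s a))| := le_abs_self _
        _ = |μ * a| * |(a * deriv s a) * Γ (s a)| := abs_mul _ _
        _ ≤ |μ * a| * (K * ((a * deriv s a) ^ 2 + (s a) ^ 2) / 2) :=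
            mul_le_mul_of_nonneg_left hc (abs_nonneg _)
        _ = |μ| * a * (K * ((a * deriv s a) ^ 2 + (s a) ^ 2) / 2) := by
            rw [abs_mul, abs_of_pos ha.1]
    have hmain : ((a * deriv s a) ^ 2 + (s a) ^ 2) / 2 ≤ (1 + 8 / Q 0) * E a := by
      have hs2' : (s a) ^ 2 ≤ 8 / Q 0 * V (s a) := by
        rw [div_mul_eq_mul_div, le_div_iff₀ hq0]
        nlinarith
      have hR : 0 ≤ 8 / Q 0 := by positivity
      have hpart : 8 / Q 0 * V (s a) ≤ 8 / Q 0 * E a := mul_le_mul_of_nonneg_left hVE hR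
      have hP2 : (a * deriv s a) ^ 2 / 2 ≤ E a := by
        rw [hEdef]; simp only; linarith
      have hRE : 0 ≤ 8 / Q 0 * E a := mul_nonneg hR hE0
      linarith
    calc μ * a ^ 2 * Γ (s a) * deriv s a
        ≤ |μ| * a * (K * ((a * deriv s a) ^ 2 + (s a) ^ 2) / 2) := step1
      _ = (|μ| * K * a) * (((a * deriv s a) ^ 2 + (s a) ^ 2) / 2) := by ring
      _ ≤ (|μ| * K * a) * ((1 + 8 / Q 0) * E a) :=
          mul_le_mul_of_nonneg_left hmain
            (mul_nonneg (mul_nonneg (abs_nonneg _) hK0) ha.1.le)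
      _ = C * a * E a := by rw [hCdef]; ring
  -- the auxiliary decreasing function
  set φ : ℝ → ℝ := fun a => Real.exp (-(C * a ^ 2 / 2)) with hφdef
  have hφd : ∀ a : ℝ, HasDerivAt φ (φ a * (-(C * a))) a := by
    intro a
    have hinner : HasDerivAt (fun t : ℝ => -(C * t ^ 2 / 2)) (-(C * a)) a := by
      have := (((hasDerivAt_pow 2 a).const_mul C).div_const 2).neg
      refine this.congr_deriv ?_
      push_cast
      ring
    exact hinner.exp
  have hφpos : ∀ a : ℝ, 0 < φ a := fun a => Real.exp_pos _
  have hgd : ∀ a ∈ Ioc (0:ℝ) a₀, HasDerivAt (fun t => E t * φ t)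
      (μ * a ^ 2 * Γ (s a) * deriv s a * φ a + E a * (φ a * (-(C * a)))) a :=
    fun a ha => (hE' a ha).mul (hφd a)
  have hanti : AntitoneOn (fun t => E t * φ t) (Ioc 0 a₁) := by
    apply antitoneOn_of_hasDerivWithinAt_nonpos (convex_Ioc 0 a₁)
      (f' := fun a => μ * a ^ 2 * Γ (s a) * deriv s a * φ a + E a * (φ a * (-(C * a))))
    · exact fun a ha => (hgd a (hsubI ha)).continuousAt.continuousWithinAt
    · intro a ha
      rw [interior_Ioc] at ha
      exact (hgd a (hsubI (Ioo_subset_Ioc_self ha))).hasDerivWithinAt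
    · intro a ha
      rw [interior_Ioc] at ha
      have hb := hEbound a (Ioo_subset_Ioc_self ha)
      have hdiff0 : μ * a ^ 2 * Γ (s a) * deriv s a - C * a * E a ≤ 0 := by linarith
      have : μ * a ^ 2 * Γ (s a) * deriv s a * φ a + E a * (φ a * (-(C * a)))
          = (μ * a ^ 2 * Γ (s a) * deriv s a - C * a * E a) * φ a := by ring
      rw [this]
      exact mul_nonpos_of_nonpos_of_nonneg hdiff0 (hφpos a).le
  -- the limit of E ⬝ φ at 0⁺ is 0
  have hVcont : ContinuousAt V 0 := (hVd 0 hD0).continuousAt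
  have t1 : Filter.Tendsto (fun a => (a * deriv s a) ^ 2 / 2)
      (nhdsWithin 0 (Ioi 0)) (nhds 0) := by
    have hcont : Continuous (fun y : ℝ => y ^ 2 / 2) := (continuous_pow 2).div_const 2
    have := (hcont.tendsto 0).comp hlim1
    simpa [Function.comp_def] using this
  have t2 : Filter.Tendsto (fun a => V (s a)) (nhdsWithin 0 (Ioi 0)) (nhds 0) := by
    have := hVcont.tendsto.comp hlim0
    simpa [hV0, Function.comp_def] using this
  have tE : Filter.Tendsto E (nhdsWithin 0 (Ioi 0)) (nhds 0) := by
    have := t1.add t2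
    simpa [hEdef] using this
  have tφ : Filter.Tendsto φ (nhdsWithin 0 (Ioi 0)) (nhds 1) := by
    have hφc : Continuous φ :=
      Real.continuous_exp.comp ((continuous_const.mul (continuous_pow 2)).div_const 2).neg
    have h := hφc.continuousWithinAt (s := Ioi (0:ℝ)) (x := (0:ℝ))
    have hφ0 : φ 0 = 1 := by simp [hφdef]
    exact hφ0 ▸ h
  have hgt : Filter.Tendsto (fun t => E t * φ t) (nhdsWithin 0 (Ioi 0)) (nhds 0) := by
    have h := tE.mul tφ
    rw [(by norm_num : (0:ℝ) * 1 = 0)] at h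
    exact h
  -- E vanishes on (0, a₁]
  have hBzero : ∀ a ∈ Ioc (0:ℝ) a₁, s a = 0 ∧ deriv s a = 0 := by
    intro a ha
    have hga : E a * φ a ≤ 0 := by
      apply ge_of_tendsto hgt
      filter_upwards [Ioo_mem_nhdsGT_of_mem (left_mem_Ico.mpr ha.1)] with x hx
      exact hanti ⟨hx.1, hx.2.le.trans ha.2⟩ ha hx.2.le
    have hEa : E a ≤ 0 := by
      by_contra h
      push_neg at h
      nlinarith [mul_pos h (hφpos a)]
    have hδa := hsmall a ha
    have hs2 : Q 0 / 8 * (s a) ^ 2 ≤ V (s a) := hVlb _ hδa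
    have hV0' : 0 ≤ V (s a) := le_trans (by positivity) hs2
    have hP : 0 ≤ (a * deriv s a) ^ 2 / 2 := by positivity
    have hEa' : (a * deriv s a) ^ 2 / 2 + V (s a) ≤ 0 := hEa
    have hVz : V (s a) = 0 := by linarith only [hEa', hV0', hP]
    have hPz : (a * deriv s a) ^ 2 / 2 = 0 := by linarith only [hEa', hV0', hP]
    have h8 : 0 < Q 0 / 8 := by linarith
    have hs2z : (s a) ^ 2 ≤ 0 := by
      by_contra hh
      push_neg at hh
      nlinarith [mul_pos h8 hh]
    have hsq : (s a) ^ 2 = 0 := le_antisymm hs2z (sq_nonneg _)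
    have hsz : s a = 0 := pow_eq_zero_iff (n := 2) (by norm_num) |>.mp hsq
    have hdz : deriv s a = 0 := by
      have h1 : (a * deriv s a) ^ 2 = 0 := by linarith
      have h2 : a * deriv s a = 0 := by
        exact pow_eq_zero_iff (n := 2) (by norm_num) |>.mp h1
      rcases mul_eq_zero.mp h2 with h | h
      · exact absurd h (ne_of_gt ha.1)
      · exact h
    exact ⟨hsz, hdz⟩
  -- Phase C : propagate to [a₁, a₀]
  have hIccsub : Icc a₁ a₀ ⊆ Ioc 0 a₀ := fun x hx => ⟨lt_of_lt_of_le ha₁pos hx.1, hx.2⟩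
  have hscont : ContinuousOn s (Icc a₁ a₀) :=
    fun x hx => ((hdiff x (hIccsub hx)).1.continuousAt).continuousWithinAt
  obtain ⟨M, hM⟩ := isCompact_Icc.exists_bound_of_continuousOn hscont
  obtain ⟨K₂, hK₂0, hK₂b⟩ := hΓup M
  have hQScont : ContinuousOn (fun x => Q (s x)) (Icc a₁ a₀) :=
    hQc.comp hscont fun x hx => hmap x (hIccsub hx)
  obtain ⟨N, hN⟩ := isCompact_Icc.exists_bound_of_continuousOn hQScont
  have hN0 : 0 ≤ N := le_trans (norm_nonneg _) (hN a₁ (left_mem_Icc.mpr ha₁le))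
  set C₂ : ℝ := 1 + |μ| * K₂ + N * K₂ / a₁ ^ 2 with hC₂def
  set H : ℝ → ℝ := fun a => (s a) ^ 2 + (deriv s a) ^ 2 with hHdef
  have hH' : ∀ a ∈ Ioc (0:ℝ) a₀, HasDerivAt H
      (2 * s a * deriv s a + 2 * deriv s a * deriv (deriv s) a) a := by
    intro a ha
    have hs := (hdiff a ha).1
    have hd := (hdiff a ha).2
    have := (hs.hasDerivAt.pow 2).add (hd.hasDerivAt.pow 2)
    refine this.congr_deriv ?_
    push_cast
    ring
  have hHbound : ∀ a ∈ Icc a₁ a₀,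
      2 * s a * deriv s a + 2 * deriv s a * deriv (deriv s) a ≤ C₂ * H a := by
    intro a ha
    have ha' : a ∈ Ioc (0:ℝ) a₀ := hIccsub ha
    have hd'eq : deriv (deriv s) a
        = μ * Γ (s a) - deriv s a / a - Γ (s a) * Q (s a) / a ^ 2 := by
      have := hode a ha'; linarith
    rw [hd'eq]
    have hsM : |s a| ≤ M := by
      have := hM a ha; rwa [Real.norm_eq_abs] at this
    have hG : |Γ (s a)| ≤ K₂ * |s a| := hK₂b (s a) hsM
    have hQa : |Q (s a)| ≤ N := by
      have := hN a ha; rwa [Real.norm_eq_abs] at this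
    have hcb := cross_bound (deriv s a) K₂ hK₂0 hG
    have ht1 : 2 * s a * deriv s a ≤ (s a) ^ 2 + (deriv s a) ^ 2 :=
      two_mul_le_add_sq _ _
    have ht2 : 2 * μ * (deriv s a * Γ (s a))
        ≤ 2 * |μ| * (K₂ * ((deriv s a) ^ 2 + (s a) ^ 2) / 2) := by
      calc 2 * μ * (deriv s a * Γ (s a))
          ≤ |2 * μ * (deriv s a * Γ (s a))| := le_abs_self _
        _ = 2 * |μ| * |deriv s a * Γ (s a)| := by
            rw [abs_mul, abs_mul, abs_two]
        _ ≤ 2 * |μ| * (K₂ * ((deriv s a) ^ 2 + (s a) ^ 2) / 2) :=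
            mul_le_mul_of_nonneg_left hcb (by positivity)
    have ht3 : -(2 * (deriv s a) ^ 2 / a) ≤ 0 := by
      have h0 : 0 ≤ 2 * (deriv s a) ^ 2 / a := div_nonneg (by positivity) ha'.1.le
      linarith
    have ha₁a : a₁ ≤ a := ha.1
    have ha₁sq : a₁ ^ 2 ≤ a ^ 2 := by nlinarith [ha₁pos]
    have hdivle : 2 * |Q (s a)| / a ^ 2 ≤ 2 * N / a₁ ^ 2 := by
      apply div_le_div₀ (by positivity) (by linarith) (by positivity) ha₁sq
    have ht4 : -(2 * Q (s a) / a ^ 2) * (deriv s a * Γ (s a))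
        ≤ 2 * N / a₁ ^ 2 * (K₂ * ((deriv s a) ^ 2 + (s a) ^ 2) / 2) := by
      calc -(2 * Q (s a) / a ^ 2) * (deriv s a * Γ (s a))
          ≤ |2 * Q (s a) / a ^ 2 * (deriv s a * Γ (s a))| := by
            have he : -(2 * Q (s a) / a ^ 2) * (deriv s a * Γ (s a))
                = -(2 * Q (s a) / a ^ 2 * (deriv s a * Γ (s a))) := by ring
            rw [he]
            exact neg_le_abs _
        _ = 2 * |Q (s a)| / a ^ 2 * |deriv s a * Γ (s a)| := by
            rw [abs_mul, abs_div, abs_mul, abs_two, abs_of_nonneg (by positivity : (0:ℝ) ≤ a ^ 2)]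
        _ ≤ 2 * N / a₁ ^ 2 * (K₂ * ((deriv s a) ^ 2 + (s a) ^ 2) / 2) :=
            mul_le_mul hdivle hcb (abs_nonneg _) (by positivity)
    have expand : 2 * s a * deriv s a + 2 * deriv s a *
        (μ * Γ (s a) - deriv s a / a - Γ (s a) * Q (s a) / a ^ 2)
        = 2 * s a * deriv s a + 2 * μ * (deriv s a * Γ (s a))
          + (-(2 * (deriv s a) ^ 2 / a))
          + (-(2 * Q (s a) / a ^ 2) * (deriv s a * Γ (s a))) := by ring
    have hHa : H a = (s a) ^ 2 + (deriv s a) ^ 2 := rfl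
    rw [expand, hHa, hC₂def]
    have key4 : -(2 * Q (s a) / a ^ 2) * (deriv s a * Γ (s a))
        ≤ N * K₂ / a₁ ^ 2 * ((s a) ^ 2 + (deriv s a) ^ 2) := by
      calc -(2 * Q (s a) / a ^ 2) * (deriv s a * Γ (s a))
          ≤ 2 * N / a₁ ^ 2 * (K₂ * ((deriv s a) ^ 2 + (s a) ^ 2) / 2) := ht4
        _ = N * K₂ / a₁ ^ 2 * ((s a) ^ 2 + (deriv s a) ^ 2) := by ring
    have key2 : 2 * μ * (deriv s a * Γ (s a))
        ≤ |μ| * K₂ * ((s a) ^ 2 + (deriv s a) ^ 2) := by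
      calc 2 * μ * (deriv s a * Γ (s a))
          ≤ 2 * |μ| * (K₂ * ((deriv s a) ^ 2 + (s a) ^ 2) / 2) := ht2
        _ = |μ| * K₂ * ((s a) ^ 2 + (deriv s a) ^ 2) := by ring
    linarith only [ht1, key2, ht3, key4]
  -- decreasing quantity on [a₁, a₀]
  set ψ : ℝ → ℝ := fun a => Real.exp (-(C₂ * a)) with hψdef
  have hψd : ∀ a : ℝ, HasDerivAt ψ (ψ a * (-C₂)) a := by
    intro a
    have hinner : HasDerivAt (fun t : ℝ => -(C₂ * t)) (-C₂) a := by
      exact ((hasDerivAt_id a).const_mul C₂).neg.congr_deriv (by simp)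
    exact hinner.exp
  have hψpos : ∀ a : ℝ, 0 < ψ a := fun a => Real.exp_pos _
  have hg2d : ∀ a ∈ Ioc (0:ℝ) a₀, HasDerivAt (fun t => H t * ψ t)
      ((2 * s a * deriv s a + 2 * deriv s a * deriv (deriv s) a) * ψ a
        + H a * (ψ a * (-C₂))) a :=
    fun a ha => (hH' a ha).mul (hψd a)
  have hanti2 : AntitoneOn (fun t => H t * ψ t) (Icc a₁ a₀) := by
    apply antitoneOn_of_hasDerivWithinAt_nonpos (convex_Icc a₁ a₀)
      (f' := fun a => (2 * s a * deriv s a + 2 * deriv s a * deriv (deriv s) a) * ψ a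
        + H a * (ψ a * (-C₂)))
    · exact fun a ha => (hg2d a (hIccsub ha)).continuousAt.continuousWithinAt
    · intro a ha
      rw [interior_Icc] at ha
      exact (hg2d a (hIccsub (Ioo_subset_Icc_self ha))).hasDerivWithinAt
    · intro a ha
      rw [interior_Icc] at ha
      have hb := hHbound a (Ioo_subset_Icc_self ha)
      have hdiff0 : 2 * s a * deriv s a + 2 * deriv s a * deriv (deriv s) a
          - C₂ * H a ≤ 0 := by linarith
      have : (2 * s a * deriv s a + 2 * deriv s a * deriv (deriv s) a) * ψ a
          + H a * (ψ a * (-C₂))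
          = (2 * s a * deriv s a + 2 * deriv s a * deriv (deriv s) a - C₂ * H a) * ψ a := by
        ring
      rw [this]
      exact mul_nonpos_of_nonpos_of_nonneg hdiff0 (hψpos a).le
  have hHa₁ : H a₁ = 0 := by
    obtain ⟨h1, h2⟩ := hBzero a₁ ⟨ha₁pos, le_refl a₁⟩
    simp [hHdef, h1, h2]
  -- conclusion
  intro a ha
  rcases le_or_gt a a₁ with hle | hlt
  · exact (hBzero a ⟨ha.1, hle⟩).1
  · have haI : a ∈ Icc a₁ a₀ := ⟨hlt.le, ha.2⟩
    have hle2 : H a * ψ a ≤ H a₁ * ψ a₁ := hanti2 (left_mem_Icc.mpr ha₁le) haI hlt.le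
    rw [hHa₁, zero_mul] at hle2
    have hH0 : 0 ≤ H a := add_nonneg (sq_nonneg _) (sq_nonneg _)
    have hHa : H a ≤ 0 := by
      by_contra h
      push_neg at h
      nlinarith [mul_pos h (hψpos a)]
    have hH00 : (s a) ^ 2 + (deriv s a) ^ 2 = 0 := le_antisymm hHa hH0
    have h1 : (s a) ^ 2 ≤ 0 := by linarith only [hH00, sq_nonneg (deriv s a)]
    exact pow_eq_zero_iff (n := 2) (by norm_num) |>.mp (le_antisymm h1 (sq_nonneg _))

/-- If `k² + bk > 0`, any solution of the reduced radial equation (4.24) on `(0,a₀]`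
with `s → 0` and `a s′ → 0` as `a → 0⁺` is identically zero. -/
theorem stmt1 (k b c μ : ℝ) (Γ P : ℝ → ℝ)
    (hcase : (Γ = Real.sin ∧ P = Psph) ∨ (Γ = Real.sinh ∧ P = Phyp))
    (hk : k ^ 2 + b * k > 0)
    (a₀ : ℝ) (ha₀ : 0 < a₀) (s : ℝ → ℝ)
    (hdiff : ∀ a ∈ Ioc (0:ℝ) a₀, DifferentiableAt ℝ s a ∧ DifferentiableAt ℝ (deriv s) a)
    (hrange : Γ = Real.sin → ∀ a ∈ Ioc (0:ℝ) a₀, s a ∈ Ioo (-Real.pi) Real.pi)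
    (hode : ∀ a ∈ Ioc (0:ℝ) a₀,
      deriv (deriv s) a + deriv s a / a - μ * Γ (s a)
        + deriv (Vfun k b c Γ P) (s a) / a ^ 2 = 0)
    (hlim0 : Filter.Tendsto s (nhdsWithin 0 (Ioi 0)) (nhds 0))
    (hlim1 : Filter.Tendsto (fun a => a * deriv s a) (nhdsWithin 0 (Ioi 0)) (nhds 0)) :
    ∀ a ∈ Ioc (0:ℝ) a₀, s a = 0 := by
  rcases hcase with ⟨hΓ, hP⟩ | ⟨hΓ, hP⟩
  · subst hΓ; subst hP
    have hπ := Real.pi_pos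
    apply key μ Real.sin (Vfun k b c Real.sin Psph) (Qsph k b c) (Ioo (-Real.pi) Real.pi)
      isOpen_Ioo ⟨by linarith, hπ⟩
    · exact fun x => Real.sin_neg x
    · intro x hx
      rcases eq_or_lt_of_le hx.1 with h | h
      · simp [← h]
      · have h2 := Real.sin_gt_sub_cube h
        have h3 : 0 ≤ x * (1 - x) * (1 + x) :=
          mul_nonneg (mul_nonneg h.le (by linarith [hx.2])) (by linarith [h.le])
        nlinarith [h2, h3]
    · exact fun M => ⟨1, zero_le_one, fun x _ => by rw [one_mul]; exact abs_sin_le_abs x⟩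
    · unfold Qsph
      apply ContinuousOn.add
      · fun_prop
      · exact ContinuousOn.div continuousOn_const (by fun_prop)
          (fun x hx => pow_ne_zero 2 (one_add_cos_pos hx).ne')
    · have : Qsph k b c 0 = k ^ 2 + b * k + c ^ 2 / 4 := by
        unfold Qsph; rw [Real.cos_zero]; ring
      rw [this]; nlinarith [sq_nonneg c]
    · simp [Vfun, Gfun, Psph, Ffun_sin]
    · exact fun x hx => hasDerivAt_Vsph k b c hx
    · exact ha₀
    · exact hdiff
    · exact hrange rfl
    · intro a ha
      have h := hode a ha
      rwa [(hasDerivAt_Vsph k b c (hrange rfl a ha)).deriv] at h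
    · exact hlim0
    · exact hlim1
  · subst hΓ; subst hP
    apply key μ Real.sinh (Vfun k b c Real.sinh Phyp) (Qhyp k b c) univ isOpen_univ (mem_univ 0)
    · exact fun x => Real.sinh_neg x
    · intro x hx
      rcases eq_or_lt_of_le hx.1 with h | h
      · simp [← h]
      · have h2 : x < Real.sinh x := Real.self_lt_sinh_iff.mpr h
        linarith
    · exact fun M => ⟨Real.cosh M, (Real.cosh_pos M).le, fun x hx => abs_sinh_le hx⟩
    · apply Continuous.continuousOn
      apply Continuous.add
      · fun_prop
      · exact Continuous.div continuous_const (by fun_prop)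
          (fun x => pow_ne_zero 2 (by positivity))
    · have : Qhyp k b c 0 = k ^ 2 + b * k + c ^ 2 / 4 := by
        unfold Qhyp; rw [Real.cosh_zero]; ring
      rw [this]; nlinarith [sq_nonneg c]
    · simp [Vfun, Gfun, Phyp, Ffun_sinh]
    · exact fun x _ => hasDerivAt_Vhyp k b c x
    · exact ha₀
    · exact hdiff
    · exact fun a _ => mem_univ _
    · intro a ha
      have h := hode a ha
      rwa [(hasDerivAt_Vhyp k b c (s a)).deriv] at h
    · exact hlim0
    · exact hlim1
end

section
/- Assume c ≠ 0. Let a₁, a₂ ∈ (0,∞], let s : (−a₁, a₂) → ℝ be continuous with s(0) = 0, and let σ be defined on (−a₁,a₂)∖{0} and satisfy a · sin(s(a)) · σ(a) = −c (1 − cos(s(a))) for all a ∈ (−a₁,a₂) with a ≠ 0. Then s(a) ∈ (−π, π) for all a ∈ (−a₁, a₂). -/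
open Set

/-- Sphere case: if `c ≠ 0`, `s` is continuous on `(−a₁,a₂)` (with `a₁,a₂ ∈ (0,∞]`),
`s(0) = 0`, and the angular-momentum identity
`a sin(s(a)) σ(a) = −c (1 − cos(s(a)))` holds for `a ≠ 0`, then `s` never reaches `±π`. -/
theorem stmt4 (c : ℝ) (hc : c ≠ 0) (a₁ a₂ : EReal) (ha₁ : 0 < a₁) (ha₂ : 0 < a₂)
    (s σ : ℝ → ℝ)
    (hs_cont : ContinuousOn s {a : ℝ | -a₁ < (a : EReal) ∧ (a : EReal) < a₂})
    (hs0 : s 0 = 0)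
    (hrel : ∀ a : ℝ, -a₁ < (a : EReal) → (a : EReal) < a₂ → a ≠ 0 →
      a * Real.sin (s a) * σ a = -c * (1 - Real.cos (s a))) :
    ∀ a : ℝ, -a₁ < (a : EReal) → (a : EReal) < a₂ →
      s a ∈ Ioo (-Real.pi) Real.pi := by
  set D : Set ℝ := {a : ℝ | -a₁ < (a : EReal) ∧ (a : EReal) < a₂} with hD
  have h0D : (0 : ℝ) ∈ D := by
    constructor
    · simpa using EReal.neg_lt_of_neg_lt (a := ((0 : ℝ) : EReal)) (b := a₁) (by simpa using ha₁)
    · simpa using ha₂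
  -- s never takes value π or -π on D
  have key : ∀ b ∈ D, s b ≠ Real.pi ∧ s b ≠ -Real.pi := by
    intro b hb
    constructor <;> intro hsb
    · have hb0 : b ≠ 0 := by
        intro h; rw [h, hs0] at hsb; exact Real.pi_ne_zero hsb.symm
      have := hrel b hb.1 hb.2 hb0
      rw [hsb, Real.sin_pi, Real.cos_pi] at this
      simp at this
      exact hc this
    · have hb0 : b ≠ 0 := by
        intro h; rw [h, hs0] at hsb
        exact Real.pi_ne_zero (by linarith)
      have := hrel b hb.1 hb.2 hb0
      rw [hsb, Real.sin_neg, Real.sin_pi, Real.cos_neg, Real.cos_pi] at this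
      simp at this
      exact hc this
  -- D is ord-connected, hence preconnected
  have hDoc : D.OrdConnected := by
    constructor
    intro x hx y hy z hz
    exact ⟨lt_of_lt_of_le hx.1 (EReal.coe_le_coe_iff.2 hz.1),
      lt_of_le_of_lt (EReal.coe_le_coe_iff.2 hz.2) hy.2⟩
  have hDpc : IsPreconnected D := hDoc.isPreconnected
  have himg : IsPreconnected (s '' D) := hDpc.image s hs_cont
  have himgOC : (s '' D).OrdConnected := himg.ordConnected
  intro a ha1 ha2
  have haD : a ∈ D := ⟨ha1, ha2⟩
  have h0img : (0 : ℝ) ∈ s '' D := ⟨0, h0D, hs0⟩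
  have haimg : s a ∈ s '' D := ⟨a, haD, rfl⟩
  constructor
  · by_contra h
    push_neg at h
    have : -Real.pi ∈ s '' D :=
      himgOC.out haimg h0img ⟨h, by linarith [Real.pi_pos]⟩
    obtain ⟨b, hb, hsb⟩ := this
    exact (key b hb).2 hsb
  · by_contra h
    push_neg at h
    have : Real.pi ∈ s '' D :=
      himgOC.out h0img haimg ⟨le_of_lt Real.pi_pos, h⟩
    obtain ⟨b, hb, hsb⟩ := this
    exact (key b hb).1 hsb
end

section
/- Radial case k = 0 (so G ≡ 0 and V(s) = (c²/2) P(s)). Let μ, c ∈ ℝ, let a₀ > 0, and let s : (0,a₀] → ℝ be twice differentiable, with s(a) ∈ (−π,π) for all a in the sphere case, solving s″(a) + s′(a)/a − μ Γ(s(a)) + (c²/2) P′(s(a))/a² = 0 on (0,a₀], with lim_{a→0⁺} s(a) = 0 and lim_{a→0⁺} a s′(a) = 0. Then s is identically zero on (0,a₀]; in other words, there is no nontrivial radial (hyperbolically radial, k = 0) standing-wave profile satisfying these boundary conditions at a = 0. -/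
open Set

open Filter Real in
lemma gronwall_aux {f f' : ℝ → ℝ} {K a₀ : ℝ} (hK : 0 ≤ K)
    (hd : ∀ x ∈ Ioc (0:ℝ) a₀, HasDerivAt f (f' x) x)
    (hb : ∀ x ∈ Ioc (0:ℝ) a₀, f' x ≤ K * f x)
    (hnn : ∀ x ∈ Ioc (0:ℝ) a₀, 0 ≤ f x)
    (hlim : Filter.Tendsto f (nhdsWithin 0 (Ioi 0)) (nhds 0)) :
    ∀ x ∈ Ioc (0:ℝ) a₀, f x = 0 := by
  intro x hx
  have key : ∀ ε ∈ Ioc (0:ℝ) x, f x ≤ f ε * Real.exp (K * a₀) := by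
    intro ε hε
    have hsub : Icc ε x ⊆ Ioc 0 a₀ := fun t ht => ⟨lt_of_lt_of_le hε.1 ht.1, le_trans ht.2 hx.2⟩
    have hcont : ContinuousOn f (Icc ε x) := fun t ht =>
      ((hd t (hsub ht)).continuousAt).continuousWithinAt
    have hslope : ∀ t ∈ Ico ε x, ∀ r, f' t < r →
        ∃ᶠ z in nhdsWithin t (Ioi t), (z - t)⁻¹ * (f z - f t) < r := by
      intro t ht r hr
      have hd' := hd t (hsub ⟨ht.1, le_of_lt ht.2⟩)
      have hT : Tendsto (slope f t) (nhdsWithin t (Ioi t)) (nhds (f' t)) :=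
        (hasDerivAt_iff_tendsto_slope.mp hd').mono_left
          (nhdsWithin_mono t (fun z hz => ne_of_gt hz))
      have hev : ∀ᶠ z in nhdsWithin t (Ioi t), slope f t z < r := hT.eventually_lt_const hr
      refine (hev.mono ?_).frequently
      intro z hz
      rwa [slope_def_field, div_eq_inv_mul] at hz
    have H := le_gronwallBound_of_liminf_deriv_right_le (ε := 0) hcont hslope (le_refl (f ε))
      (fun t ht => by
        have := hb t (hsub (Ico_subset_Icc_self ht)); linarith) x (right_mem_Icc.2 hε.2)
    rw [gronwallBound_ε0] at H
    refine H.trans ?_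
    have h1 : Real.exp (K * (x - ε)) ≤ Real.exp (K * a₀) := by
      apply Real.exp_le_exp.2
      apply mul_le_mul_of_nonneg_left _ hK
      have := hε.1; have := hx.2; linarith
    exact mul_le_mul_of_nonneg_left h1 (hnn ε ⟨hε.1, le_trans hε.2 hx.2⟩)
  have hev : ∀ᶠ ε in nhdsWithin (0:ℝ) (Ioi 0), f x ≤ f ε * Real.exp (K * a₀) := by
    filter_upwards [Ioo_mem_nhdsGT_of_mem (show (0:ℝ) ∈ Ico (0:ℝ) x from ⟨le_refl 0, hx.1⟩)]
      with ε hε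
    exact key ε ⟨hε.1, le_of_lt hε.2⟩
  have hlim' : Tendsto (fun ε => f ε * Real.exp (K * a₀)) (nhdsWithin (0:ℝ) (Ioi 0)) (nhds 0) := by
    simpa using hlim.mul_const (Real.exp (K * a₀))
  exact le_antisymm (ge_of_tendsto hlim' hev) (hnn x hx)


set_option maxHeartbeats 1000000 in
open Filter Real in
/-- Radial case `k = 0`: no nontrivial radial standing-wave profile.  Any solution of
`s″ + s′/a − μ Γ(s) + (c²/2) P′(s)/a² = 0` on `(0,a₀]` with `s → 0` and `a s′ → 0`
as `a → 0⁺` is identically zero. -/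
theorem stmt11 (μ c : ℝ) (Γ P : ℝ → ℝ)
    (hcase : (Γ = Real.sin ∧ P = Psph) ∨ (Γ = Real.sinh ∧ P = Phyp))
    (a₀ : ℝ) (ha₀ : 0 < a₀) (s : ℝ → ℝ)
    (hdiff : ∀ a ∈ Ioc (0:ℝ) a₀, DifferentiableAt ℝ s a ∧ DifferentiableAt ℝ (deriv s) a)
    (hrange : Γ = Real.sin → ∀ a ∈ Ioc (0:ℝ) a₀, s a ∈ Ioo (-Real.pi) Real.pi)
    (hode : ∀ a ∈ Ioc (0:ℝ) a₀,
      deriv (deriv s) a + deriv s a / a - μ * Γ (s a)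
        + c ^ 2 / 2 * deriv P (s a) / a ^ 2 = 0)
    (hlim0 : Filter.Tendsto s (nhdsWithin 0 (Ioi 0)) (nhds 0))
    (hlim1 : Filter.Tendsto (fun a => a * deriv s a) (nhdsWithin 0 (Ioi 0)) (nhds 0)) :
    ∀ a ∈ Ioc (0:ℝ) a₀, s a = 0 := by
  -- boundedness of s
  obtain ⟨δ, hδpos, hδ⟩ := Metric.tendsto_nhdsWithin_nhds.mp hlim0 1 one_pos
  have hd0 : (0:ℝ) < min (δ/2) a₀ := lt_min (by linarith) ha₀
  have hsubset : Icc (min (δ/2) a₀) a₀ ⊆ Ioc 0 a₀ := fun t ht => ⟨lt_of_lt_of_le hd0 ht.1, ht.2⟩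
  have hco : ContinuousOn s (Icc (min (δ/2) a₀) a₀) := fun t ht =>
    ((hdiff t (hsubset ht)).1.continuousAt).continuousWithinAt
  obtain ⟨C0, hC0⟩ := (isCompact_Icc).exists_bound_of_continuousOn hco
  set B := max C0 1 with hBdef
  have hB1 : (1:ℝ) ≤ B := le_max_right _ _
  have hB0 : (0:ℝ) ≤ B := by linarith
  have hB : ∀ a ∈ Ioc (0:ℝ) a₀, |s a| ≤ B := by
    intro a ha
    rcases le_or_gt (min (δ/2) a₀) a with h | h
    · exact le_trans (hC0 a ⟨h, ha.2⟩) (le_max_left _ _)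
    · have h1 : a < δ := lt_of_lt_of_le h (le_trans (min_le_left _ _) (by linarith))
      have h2 := hδ (mem_Ioi.2 ha.1) (by rwa [Real.dist_eq, sub_zero, abs_of_pos ha.1])
      rw [Real.dist_eq, sub_zero] at h2
      linarith
  -- case-dependent facts
  obtain ⟨Cb, hCbpos, L, hL0, hPnn, hPdiff, hGP, hGL, hP0⟩ :
      ∃ Cb : ℝ, 0 < Cb ∧ ∃ L : ℝ, 0 ≤ L ∧
        (∀ a ∈ Ioc (0:ℝ) a₀, 0 ≤ P (s a)) ∧
        (∀ a ∈ Ioc (0:ℝ) a₀, DifferentiableAt ℝ P (s a)) ∧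
        (∀ a ∈ Ioc (0:ℝ) a₀, (Γ (s a))^2 ≤ Cb^2 * P (s a)) ∧
        (∀ a ∈ Ioc (0:ℝ) a₀, |Γ (s a)| ≤ L * |s a|) ∧
        Filter.Tendsto (fun ε => P (s ε)) (nhdsWithin 0 (Ioi 0)) (nhds 0) := by
    rcases hcase with ⟨hΓ, hP⟩ | ⟨hΓ, hP⟩
    · -- sphere
      subst hΓ; subst hP
      have hpos : ∀ a ∈ Ioc (0:ℝ) a₀, 0 < 1 + Real.cos (s a) := by
        intro a ha
        have hu := hrange rfl a ha
        have h2 : s a / 2 ∈ Ioo (-(Real.pi/2)) (Real.pi/2) :=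
          ⟨by have := hu.1; linarith, by have := hu.2; linarith⟩
        have h3 := Real.cos_pos_of_mem_Ioo h2
        have h4 := Real.cos_sq (s a / 2)
        rw [show 2 * (s a / 2) = s a by ring] at h4
        nlinarith
      refine ⟨2, by norm_num, 1, by norm_num, ?_, ?_, ?_, ?_, ?_⟩
      · intro a ha
        exact div_nonneg (by nlinarith [Real.cos_le_one (s a)]) (le_of_lt (hpos a ha))
      · intro a ha
        show DifferentiableAt ℝ (fun v => (1 - Real.cos v) / (1 + Real.cos v)) (s a)
        exact DifferentiableAt.div (by fun_prop) (by fun_prop) (ne_of_gt (hpos a ha))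
      · intro a ha
        rw [Psph, show (2:ℝ)^2 * ((1 - Real.cos (s a))/(1 + Real.cos (s a)))
            = (4*(1 - Real.cos (s a)))/(1 + Real.cos (s a)) by ring, le_div_iff₀ (hpos a ha)]
        nlinarith [Real.sin_sq_add_cos_sq (s a), Real.cos_le_one (s a),
          Real.neg_one_le_cos (s a), sq_nonneg (1 - Real.cos (s a))]
      · intro a ha
        simpa using Real.abs_sin_le_abs (x := s a)
      · have hc : ContinuousAt Psph 0 := by
          show ContinuousAt (fun v => (1 - Real.cos v) / (1 + Real.cos v)) 0
          exact ContinuousAt.div (by fun_prop) (by fun_prop) (by norm_num)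
        have := hc.tendsto.comp hlim0
        simpa [Psph, Function.comp_def] using this
    · -- hyperbolic
      subst hΓ; subst hP
      refine ⟨Real.cosh B + 1, by positivity, Real.cosh B, (Real.cosh_pos B).le, ?_, ?_, ?_, ?_, ?_⟩
      · intro a ha
        have := Real.one_le_cosh (s a)
        exact div_nonneg (by linarith) (by linarith)
      · intro a ha
        show DifferentiableAt ℝ (fun v => (Real.cosh v - 1) / (Real.cosh v + 1)) (s a)
        exact DifferentiableAt.div (by fun_prop) (by fun_prop)
          (by have := Real.one_le_cosh (s a); intro h; linarith)
      · intro a ha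
        have h1 : (0:ℝ) < Real.cosh (s a) + 1 := by positivity
        have hub : Real.cosh (s a) ≤ Real.cosh B := Real.cosh_le_cosh.2
          (by rw [abs_of_nonneg hB0]; exact hB a ha)
        rw [Phyp, show (Real.cosh B + 1)^2 * ((Real.cosh (s a) - 1)/(Real.cosh (s a) + 1))
            = ((Real.cosh B + 1)^2 * (Real.cosh (s a) - 1))/(Real.cosh (s a) + 1) by ring,
            le_div_iff₀ h1]
        have h2 : 0 ≤ (Real.cosh (s a) - 1) * ((Real.cosh B + 1)^2 - (Real.cosh (s a) + 1)^2) :=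
          mul_nonneg (by linarith [Real.one_le_cosh (s a)]) (by nlinarith [Real.one_le_cosh (s a)])
        nlinarith [Real.sinh_sq (s a), h2]
      · intro a ha
        have h := Convex.norm_image_sub_le_of_norm_hasDerivWithin_le
          (f := Real.sinh) (f' := Real.cosh) (s := Icc (-B) B) (C := Real.cosh B)
          (fun t ht => (Real.hasDerivAt_sinh t).hasDerivWithinAt)
          (fun t ht => by
            rw [Real.norm_eq_abs, abs_of_pos (Real.cosh_pos t)]
            exact Real.cosh_le_cosh.2 (by rw [abs_of_nonneg hB0]; exact abs_le.2 ⟨ht.1, ht.2⟩))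
          (convex_Icc _ _) (show (0:ℝ) ∈ Icc (-B) B from ⟨by linarith, hB0⟩)
          (show s a ∈ Icc (-B) B from abs_le.1 (hB a ha))
        simpa using h
      · have hc : ContinuousAt Phyp 0 := by
          show ContinuousAt (fun v => (Real.cosh v - 1) / (Real.cosh v + 1)) 0
          exact ContinuousAt.div (by fun_prop) (by fun_prop) (by have := Real.one_le_cosh 0; norm_num)
        have := hc.tendsto.comp hlim0
        simpa [Phyp, Function.comp_def] using this
  -- a key derivative
  have hgd : ∀ a ∈ Ioc (0:ℝ) a₀,
      HasDerivAt (fun b => b * deriv s b) (deriv s a + a * deriv (deriv s) a) a := by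
    intro a ha
    have h1 := (hasDerivAt_id a).mul ((hdiff a ha).2.hasDerivAt)
    refine h1.congr_deriv ?_
    simp [id]
  -- main split on c
  by_cases hc : c = 0
  · -- c = 0 case: direct Gronwall on (s')² + s²
    subst hc
    have hode0 : ∀ a ∈ Ioc (0:ℝ) a₀, deriv (deriv s) a = μ * Γ (s a) - deriv s a / a := by
      intro a ha
      have h := hode a ha
      norm_num at h
      linarith
    -- linear bound on deriv s
    have hs'le : ∀ a ∈ Ioc (0:ℝ) a₀, |deriv s a| ≤ (|μ| * L * B) * a := by
      intro a ha
      have hC₁nn : 0 ≤ |μ| * L * B * a :=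
        mul_nonneg (mul_nonneg (mul_nonneg (abs_nonneg μ) hL0) hB0) ha.1.le
      have hder : ∀ r ∈ Ioc (0:ℝ) a,
          HasDerivWithinAt (fun b => b * deriv s b) (μ * r * Γ (s r)) (Ioc 0 a) r := by
        intro r hr
        have hr' : r ∈ Ioc (0:ℝ) a₀ := ⟨hr.1, le_trans hr.2 ha.2⟩
        have h1 := hgd r hr'
        have h2 : deriv s r + r * deriv (deriv s) r = μ * r * Γ (s r) := by
          have hr0 : r ≠ 0 := ne_of_gt hr.1
          rw [hode0 r hr']
          field_simp
          ring
        rw [h2] at h1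
        exact h1.hasDerivWithinAt
      have hbd : ∀ r ∈ Ioc (0:ℝ) a, ‖μ * r * Γ (s r)‖ ≤ |μ| * L * B * a := by
        intro r hr
        have hr' : r ∈ Ioc (0:ℝ) a₀ := ⟨hr.1, le_trans hr.2 ha.2⟩
        have h3 : |Γ (s r)| ≤ L * B :=
          le_trans (hGL r hr') (mul_le_mul_of_nonneg_left (hB r hr') hL0)
        rw [Real.norm_eq_abs, abs_mul, abs_mul, abs_of_pos hr.1]
        calc |μ| * r * |Γ (s r)| ≤ |μ| * a * (L * B) := by
              apply mul_le_mul (mul_le_mul_of_nonneg_left hr.2 (abs_nonneg μ)) h3 (abs_nonneg _)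
              exact mul_nonneg (abs_nonneg μ) ha.1.le
          _ = |μ| * L * B * a := by ring
      have key : ∀ y ∈ Ioc (0:ℝ) a, |a * deriv s a - y * deriv s y| ≤ (|μ| * L * B * a) * |a - y| := by
        intro y hy
        have h := Convex.norm_image_sub_le_of_norm_hasDerivWithin_le hder hbd (convex_Ioc 0 a)
          hy ⟨ha.1, le_refl a⟩
        simpa [Real.norm_eq_abs] using h
      have t1 : Tendsto (fun y => |a * deriv s a - y * deriv s y|) (nhdsWithin 0 (Ioi 0))
          (nhds (|a * deriv s a - 0|)) := (tendsto_const_nhds.sub hlim1).abs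
      have t2 : Tendsto (fun y : ℝ => (|μ| * L * B * a) * |a - y|) (nhdsWithin 0 (Ioi 0))
          (nhds ((|μ| * L * B * a) * |a - 0|)) :=
        Tendsto.mono_left (Continuous.tendsto
          (continuous_const.mul ((continuous_const.sub continuous_id).abs)) 0) nhdsWithin_le_nhds
      have hev : ∀ᶠ y in nhdsWithin (0:ℝ) (Ioi 0),
          |a * deriv s a - y * deriv s y| ≤ (|μ| * L * B * a) * |a - y| := by
        filter_upwards [Ioo_mem_nhdsGT_of_mem (show (0:ℝ) ∈ Ico (0:ℝ) a from ⟨le_refl 0, ha.1⟩)]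
          with y hy
        exact key y ⟨hy.1, le_of_lt hy.2⟩
      have hfin : |a * deriv s a - 0| ≤ (|μ| * L * B * a) * |a - 0| :=
        le_of_tendsto_of_tendsto t1 t2 hev
      rw [sub_zero, sub_zero, abs_mul, abs_of_pos ha.1] at hfin
      nlinarith [ha.1, abs_nonneg (deriv s a)]
    have hs'0 : Tendsto (deriv s) (nhdsWithin 0 (Ioi 0)) (nhds 0) := by
      apply squeeze_zero_norm' (a := fun y => (|μ| * L * B) * y)
      · filter_upwards [Ioo_mem_nhdsGT_of_mem (show (0:ℝ) ∈ Ico (0:ℝ) a₀ from ⟨le_refl 0, ha₀⟩)]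
          with y hy
        exact hs'le y ⟨hy.1, le_of_lt hy.2⟩
      · have : Tendsto (fun y : ℝ => (|μ| * L * B) * y) (nhdsWithin 0 (Ioi 0))
            (nhds ((|μ| * L * B) * 0)) :=
          Tendsto.mono_left (Continuous.tendsto (continuous_const.mul continuous_id) 0) nhdsWithin_le_nhds
        simpa using this
    -- Gronwall for h = (s')² + s²
    have hmain := gronwall_aux (f := fun a => (deriv s a)^2 + (s a)^2)
      (f' := fun a => 2 * deriv s a * deriv (deriv s) a + 2 * s a * deriv s a)
      (K := |μ| * L + 1) (a₀ := a₀) (add_nonneg (mul_nonneg (abs_nonneg μ) hL0) zero_le_one)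
      (by
        intro a ha
        have h1 := ((hdiff a ha).2.hasDerivAt.pow 2).add ((hdiff a ha).1.hasDerivAt.pow 2)
        refine h1.congr_deriv ?_
        ring)
      (by
        intro a ha
        show 2 * deriv s a * deriv (deriv s) a + 2 * s a * deriv s a
            ≤ (|μ| * L + 1) * ((deriv s a)^2 + (s a)^2)
        rw [hode0 a ha]
        have hG := hGL a ha
        have a1 : μ * Γ (s a) * deriv s a ≤ |μ| * (L * |s a|) * |deriv s a| := by
          calc μ * Γ (s a) * deriv s a ≤ |μ * Γ (s a) * deriv s a| := le_abs_self _
            _ = |μ| * |Γ (s a)| * |deriv s a| := by rw [abs_mul, abs_mul]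
            _ ≤ |μ| * (L * |s a|) * |deriv s a| :=
              mul_le_mul_of_nonneg_right (mul_le_mul_of_nonneg_left hG (abs_nonneg μ))
                (abs_nonneg _)
        have a2 : 2 * (|μ| * (L * |s a|) * |deriv s a|) ≤ |μ| * L * ((s a)^2 + (deriv s a)^2) := by
          nlinarith [sq_nonneg (|s a| - |deriv s a|), sq_abs (s a), sq_abs (deriv s a),
            mul_nonneg (abs_nonneg μ) hL0]
        have a3 : 2 * s a * deriv s a ≤ (s a)^2 + (deriv s a)^2 := by nlinarith [sq_nonneg (s a - deriv s a)]
        have a4 : 0 ≤ (deriv s a)^2 / a := div_nonneg (sq_nonneg _) (le_of_lt ha.1)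
        have expand : 2 * deriv s a * (μ * Γ (s a) - deriv s a / a) + 2 * s a * deriv s a
            = 2 * (μ * Γ (s a) * deriv s a) - 2 * ((deriv s a)^2 / a) + 2 * s a * deriv s a := by
          ring
        rw [expand]
        linarith)
      (by intro a ha; positivity)
      (by
        have := (hs'0.pow 2).add (hlim0.pow 2)
        simpa using this)
    intro x hx
    have h0 : (deriv s x)^2 + (s x)^2 = 0 := hmain x hx
    have h1 : (s x)^2 = 0 := by nlinarith [sq_nonneg (deriv s x), sq_nonneg (s x)]
    exact pow_eq_zero_iff two_ne_zero |>.mp h1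
  · -- c ≠ 0 case: Gronwall for E = (a s')²/2 + (c²/2) P(s)
    have hcpos : 0 < |c| := abs_pos.2 hc
    set K : ℝ := |μ| * a₀ * Cb / |c| with hKdef
    have hK0 : 0 ≤ K :=
      div_nonneg (mul_nonneg (mul_nonneg (abs_nonneg μ) ha₀.le) hCbpos.le) hcpos.le
    have hmain := gronwall_aux
      (f := fun a => (a * deriv s a)^2/2 + c^2/2 * P (s a))
      (f' := fun a => μ * a^2 * Γ (s a) * deriv s a)
      (K := K) (a₀ := a₀) hK0
      (by
        intro a ha
        show HasDerivAt (fun a => (a * deriv s a)^2/2 + c^2/2 * P (s a))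
            (μ * a^2 * Γ (s a) * deriv s a) a
        have hne : a ≠ 0 := ne_of_gt ha.1
        have h2 : HasDerivAt (fun b => P (s b)) (deriv P (s a) * deriv s a) a :=
          ((hPdiff a ha).hasDerivAt).comp a ((hdiff a ha).1.hasDerivAt)
        have h3 := (((hgd a ha).pow 2).div_const 2).add (h2.const_mul (c^2/2))
        refine h3.congr_deriv ?_
        have hode' := hode a ha
        have hs2 : deriv (deriv s) a
            = μ * Γ (s a) - deriv s a / a - c^2/2 * deriv P (s a)/a^2 := by linarith
        rw [hs2]
        field_simp
        ring)
      (by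
        intro a ha
        show μ * a^2 * Γ (s a) * deriv s a
            ≤ K * ((a * deriv s a)^2/2 + c^2/2 * P (s a))
        have hgp := hGP a ha
        have hpn := hPnn a ha
        have h1 : μ * a^2 * Γ (s a) * deriv s a
            ≤ |μ| * a₀ * (|Γ (s a)| * |a * deriv s a|) := by
          calc μ * a^2 * Γ (s a) * deriv s a
              ≤ |μ * a^2 * Γ (s a) * deriv s a| := le_abs_self _
            _ = |μ| * a * (|Γ (s a)| * |a * deriv s a|) := by
                simp only [abs_mul, abs_pow, abs_of_pos ha.1]
                ring
            _ ≤ |μ| * a₀ * (|Γ (s a)| * |a * deriv s a|) := by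
                apply mul_le_mul_of_nonneg_right _ (by positivity)
                exact mul_le_mul_of_nonneg_left ha.2 (abs_nonneg μ)
        have h2 : 2 * |c| * (|Γ (s a)| * |a * deriv s a|)
            ≤ Cb * (c^2 * P (s a) + (a * deriv s a)^2) := by
          nlinarith [sq_nonneg (|c| * |Γ (s a)| - Cb * |a * deriv s a|), sq_abs c,
            sq_abs (Γ (s a)), sq_abs (a * deriv s a), abs_nonneg (Γ (s a)),
            abs_nonneg (a * deriv s a), mul_nonneg (mul_nonneg (sq_nonneg c) hCbpos.le) hpn,
            mul_nonneg (sq_nonneg c) hpn]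
        have h3 : |Γ (s a)| * |a * deriv s a|
            ≤ Cb / (2 * |c|) * (c^2 * P (s a) + (a * deriv s a)^2) := by
          rw [div_mul_eq_mul_div, le_div_iff₀ (by positivity)]
          linarith
        calc μ * a^2 * Γ (s a) * deriv s a
            ≤ |μ| * a₀ * (|Γ (s a)| * |a * deriv s a|) := h1
          _ ≤ |μ| * a₀ * (Cb / (2 * |c|) * (c^2 * P (s a) + (a * deriv s a)^2)) :=
              mul_le_mul_of_nonneg_left h3 (by positivity)
          _ = K * ((a * deriv s a)^2/2 + c^2/2 * P (s a)) := by
              rw [hKdef]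
              field_simp
              ring)
      (by
        intro a ha
        show 0 ≤ (a * deriv s a)^2/2 + c^2/2 * P (s a)
        have := hPnn a ha
        positivity)
      (by
        have t1 : Tendsto (fun ε => (ε * deriv s ε)^2/2) (nhdsWithin 0 (Ioi 0)) (nhds 0) := by
          have := (hlim1.pow 2).div_const 2
          simpa using this
        have t2 : Tendsto (fun ε => c^2/2 * P (s ε)) (nhdsWithin 0 (Ioi 0)) (nhds 0) := by
          have := hP0.const_mul (c^2/2)
          simpa using this
        simpa using t1.add t2)
    -- deriv s vanishes on Ioc
    have hderiv0 : ∀ x ∈ Ioc (0:ℝ) a₀, deriv s x = 0 := by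
      intro x hx
      have h0 : (x * deriv s x)^2/2 + c^2/2 * P (s x) = 0 := hmain x hx
      have hpn := hPnn x hx
      have hcp : 0 ≤ c^2/2 * P (s x) := by positivity
      have h1 : (x * deriv s x)^2 = 0 := by nlinarith [sq_nonneg (x * deriv s x)]
      have h2 : x * deriv s x = 0 := by
        exact pow_eq_zero_iff two_ne_zero |>.mp h1
      rcases mul_eq_zero.mp h2 with h | h
      · exact absurd h (ne_of_gt hx.1)
      · exact h
    -- s is constant on Ioc, hence 0
    intro x hx
    have hconst : ∀ y ∈ Ioc (0:ℝ) a₀, s y = s x := by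
      intro y hy
      have h := Convex.norm_image_sub_le_of_norm_hasDerivWithin_le
        (f := s) (f' := fun _ => (0:ℝ)) (s := Ioc (0:ℝ) a₀) (C := 0)
        (fun z hz => by
          have h1 := (hdiff z hz).1.hasDerivAt
          rw [hderiv0 z hz] at h1
          exact h1.hasDerivWithinAt)
        (fun z hz => by simp) (convex_Ioc _ _) hx hy
      have : ‖s y - s x‖ ≤ 0 := by simpa using h
      have := norm_le_zero_iff.mp this
      linarith [sub_eq_zero.mp this]
    have heq : ∀ᶠ y in nhdsWithin (0:ℝ) (Ioi 0), s y = s x := by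
      filter_upwards [Ioo_mem_nhdsGT_of_mem (show (0:ℝ) ∈ Ico (0:ℝ) a₀ from ⟨le_refl 0, ha₀⟩)]
        with y hy
      exact hconst y ⟨hy.1, le_of_lt hy.2⟩
    have : Tendsto s (nhdsWithin (0:ℝ) (Ioi 0)) (nhds (s x)) :=
      Tendsto.congr' (by filter_upwards [heq] with y hy; exact hy.symm) tendsto_const_nhds
    exact tendsto_nhds_unique this hlim0
end
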